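/- arXiv:1008.1098 — 5 statements merged into one kernel-verified Lean document; each statement's English description precedes it below -/
import Mathlib

section
/- Let S be a real Banach space, Q a finite-dimensional real normed vector space, and F : Q → S → (S →L[ℝ] Q) a continuous map such that for constants K, L > 0 one has ‖F(q,s)(v)‖ ≤ K‖s‖‖v‖ and ‖(F(q₁,s) − F(q₂,s))(v)‖ ≤ L‖q₁ − q₂‖‖s‖‖v‖ for all q, q₁, q₂ ∈ Q and s, v ∈ S. Then for every C¹ function s : [0,∞) → S and every q₀ ∈ Q there exists a unique C¹ function q : [0,∞) → Q with q(0) = q₀ and q'(t) = F(q(t), s(t))(s'(t)) for all t ≥ 0. -/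
open Set
open scoped NNReal Topology

/-!
Along a fixed shape curve `s`, the equation of motion is the non-autonomous ODE
`q' = v(t, q)` with `v(t, q) = F(q, s t)(s' t)`. On every compact time interval `[0, b]` the
continuous function `‖s t‖ ‖s' t‖` is bounded, so `v` is bounded there uniformly in `q` and
Lipschitz in `q` with a uniform constant. Picard–Lindelöf then gives a solution on each `[0, n]`
(boundedness of `v` rules out blow-up), these solutions agree on overlaps by Grönwall's
inequality, and they glue to a solution on `[0, ∞)`.
-/

section ODE

variable {E : Type*} [NormedAddCommGroup E] [NormedSpace ℝ E] {v : ℝ → E → E} {a b : ℝ}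

theorem Icc_mem_nhdsWithin_Ici_of_mem_Ico {t : ℝ} (ht : t ∈ Ico a b) :
    Icc a b ∈ 𝓝[Ici a] t :=
  Filter.mem_of_superset (inter_mem_nhdsWithin _ (Iio_mem_nhds ht.2))
    fun _ hx => ⟨hx.1, le_of_lt hx.2⟩

theorem ODE_solution_unique_of_hasDerivWithinAt_Icc {K : ℝ≥0}
    (hv : ∀ t ∈ Ico a b, LipschitzWith K (v t)) {f g : ℝ → E}
    (hf : ∀ t ∈ Icc a b, HasDerivWithinAt f (v t (f t)) (Icc a b) t)
    (hg : ∀ t ∈ Icc a b, HasDerivWithinAt g (v t (g t)) (Icc a b) t)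
    (ha : f a = g a) : EqOn f g (Icc a b) := by
  have hIci {h : ℝ → E} (hh : ∀ t ∈ Icc a b, HasDerivWithinAt h (v t (h t)) (Icc a b) t) :
      ∀ t ∈ Ico a b, HasDerivWithinAt h (v t (h t)) (Ici t) t := fun t ht =>
    (hh t (Ico_subset_Icc_self ht)).mono_of_mem_nhdsWithin <|
      Filter.mem_of_superset (Icc_mem_nhdsGE ht.2) (Icc_subset_Icc_left ht.1)
  exact ODE_solution_unique_of_mem_Icc_right (s := fun _ => univ)
    (fun t ht => (hv t ht).lipschitzOnWith)
    (fun t ht => (hf t ht).continuousWithinAt) (hIci hf) (fun _ _ => trivial)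
    (fun t ht => (hg t ht).continuousWithinAt) (hIci hg) (fun _ _ => trivial) ha

theorem ODE_solution_unique_of_hasDerivWithinAt_Ici
    (hlip : ∀ b, ∃ K : ℝ≥0, ∀ t ∈ Icc a b, LipschitzWith K (v t)) {f g : ℝ → E}
    (hf : ∀ t ∈ Ici a, HasDerivWithinAt f (v t (f t)) (Ici a) t)
    (hg : ∀ t ∈ Ici a, HasDerivWithinAt g (v t (g t)) (Ici a) t)
    (ha : f a = g a) : EqOn f g (Ici a) := by
  intro b hb
  obtain ⟨K, hK⟩ := hlip b
  have hIcc {h : ℝ → E} (hh : ∀ t ∈ Ici a, HasDerivWithinAt h (v t (h t)) (Ici a) t) :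
      ∀ t ∈ Icc a b, HasDerivWithinAt h (v t (h t)) (Icc a b) t :=
    fun t ht => (hh t ht.1).mono Icc_subset_Ici_self
  exact ODE_solution_unique_of_hasDerivWithinAt_Icc (fun t ht => hK t (Ico_subset_Icc_self ht))
    (hIcc hf) (hIcc hg) ha ⟨hb, le_rfl⟩

theorem exists_hasDerivWithinAt_Icc_of_lipschitzWith_of_norm_le [CompleteSpace E]
    (hab : a ≤ b) {K M : ℝ≥0} (hcont : ∀ x, ContinuousOn (v · x) (Icc a b))
    (hlip : ∀ t ∈ Icc a b, LipschitzWith K (v t)) (hM : ∀ t ∈ Icc a b, ∀ x, ‖v t x‖ ≤ M)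
    (x₀ : E) :
    ∃ α : ℝ → E, α a = x₀ ∧ ∀ t ∈ Icc a b, HasDerivWithinAt α (v t (α t)) (Icc a b) t := by
  have hpl : IsPicardLindelof v (⟨a, le_rfl, hab⟩ : Icc a b) x₀
      (M * (b - a).toNNReal) 0 M K :=
    { lipschitzOnWith := fun t ht => (hlip t ht).lipschitzOnWith
      continuousOn := fun x _ => hcont x
      norm_le := fun t ht x _ => hM t ht x
      mul_max_le := by
        simp [Real.coe_toNNReal _ (sub_nonneg.2 hab), max_eq_left (sub_nonneg.2 hab)] }
  exact hpl.exists_eq_forall_mem_Icc_hasDerivWithinAt₀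

theorem exists_hasDerivWithinAt_Ici [CompleteSpace E]
    (hcont : ∀ x, ContinuousOn (v · x) (Ici a))
    (hlip : ∀ b, ∃ K : ℝ≥0, ∀ t ∈ Icc a b, LipschitzWith K (v t))
    (hbound : ∀ b, ∃ M : ℝ≥0, ∀ t ∈ Icc a b, ∀ x, ‖v t x‖ ≤ M) (x₀ : E) :
    ∃ α : ℝ → E, α a = x₀ ∧ ∀ t ∈ Ici a, HasDerivWithinAt α (v t (α t)) (Ici a) t := by
  have hloc (n : ℕ) : ∃ α : ℝ → E, α a = x₀ ∧
      ∀ t ∈ Icc a (a + n), HasDerivWithinAt α (v t (α t)) (Icc a (a + n)) t := by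
    obtain ⟨K, hK⟩ := hlip (a + n)
    obtain ⟨M, hM⟩ := hbound (a + n)
    exact exists_hasDerivWithinAt_Icc_of_lipschitzWith_of_norm_le (by simp)
      (fun x => (hcont x).mono Icc_subset_Ici_self) hK hM x₀
  choose α hα₀ hα using hloc
  have compat (m n : ℕ) : EqOn (α m) (α n) (Icc a (a + min m n)) := by
    obtain ⟨K, hK⟩ := hlip (a + min m n)
    have hrestrict (k : ℕ) (hk : min m n ≤ k) (t) (ht : t ∈ Icc a (a + min m n)) :
        HasDerivWithinAt (α k) (v t (α k t)) (Icc a (a + min m n)) t := by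
      have hsub : Icc a (a + min m n) ⊆ Icc a (a + k) :=
        Icc_subset_Icc_right (by simpa using hk)
      exact (hα k t (hsub ht)).mono hsub
    exact ODE_solution_unique_of_hasDerivWithinAt_Icc (fun t ht => hK t (Ico_subset_Icc_self ht))
      (hrestrict m (min_le_left m n)) (hrestrict n (min_le_right m n))
      ((hα₀ m).trans (hα₀ n).symm)
  set q : ℝ → E := fun t => α ⌈t - a⌉₊ t
  have hq (n : ℕ) : EqOn q (α n) (Icc a (a + n)) := fun t ht =>
    compat _ n ⟨ht.1, by
      rw [Nat.cast_min]
      exact le_add_of_sub_left_le (le_min (Nat.le_ceil _) (by linarith [ht.2]))⟩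
  refine ⟨q, (hq 0 ⟨le_rfl, by simp⟩).trans (hα₀ 0), fun t ht => ?_⟩
  obtain ⟨n, hn⟩ := exists_nat_gt (t - a)
  have htn : t ∈ Ico a (a + n) := ⟨ht, by linarith⟩
  have hnhds := Icc_mem_nhdsWithin_Ici_of_mem_Ico htn
  rw [hq n (Ico_subset_Icc_self htn)]
  exact ((hα n t (Ico_subset_Icc_self htn)).mono_of_mem_nhdsWithin hnhds).congr_of_eventuallyEq
    (Filter.eventuallyEq_of_mem hnhds (hq n)) (hq n (Ico_subset_Icc_self htn))

end ODE

theorem contDiffOn_one_of_hasDerivWithinAt {E : Type*} [NormedAddCommGroup E] [NormedSpace ℝ E]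
    {f f' : ℝ → E} {s : Set ℝ} (hs : UniqueDiffOn ℝ s)
    (hf : ∀ t ∈ s, HasDerivWithinAt f (f' t) s t) (hf' : ContinuousOn f' s) :
    ContDiffOn ℝ 1 f s :=
  (contDiffOn_one_iff_derivWithin hs).2
    ⟨fun t ht => (hf t ht).differentiableWithinAt,
      hf'.congr fun t ht => (hf t ht).derivWithin (hs t ht)⟩

theorem IsCompact.exists_nnreal_forall_le {X : Type*} [TopologicalSpace X] {k : Set X}
    (hk : IsCompact k) {g : X → ℝ} (hg : ContinuousOn g k) : ∃ C : ℝ≥0, ∀ x ∈ k, g x ≤ C := by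
  obtain ⟨C, hC⟩ := hk.exists_bound_of_continuousOn hg
  exact ⟨C.toNNReal, fun x hx => (le_abs_self _).trans ((hC x hx).trans C.le_coe_toNNReal)⟩

namespace LinearSwimmer

variable {S Q : Type*} [NormedAddCommGroup S] [NormedSpace ℝ S]
  [NormedAddCommGroup Q] [NormedSpace ℝ Q] {F : Q → S → S →L[ℝ] Q} {s w : ℝ → S} {a b : ℝ}

theorem exists_lipschitzWith_field {L : ℝ}
    (hFlip : ∀ (q₁ q₂ : Q) (s v : S), ‖F q₁ s v - F q₂ s v‖ ≤ L * ‖q₁ - q₂‖ * ‖s‖ * ‖v‖)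
    (hs : ContinuousOn s (Icc a b)) (hw : ContinuousOn w (Icc a b)) :
    ∃ Lip : ℝ≥0, ∀ t ∈ Icc a b, LipschitzWith Lip (fun q => F q (s t) (w t)) := by
  obtain ⟨Lip, hLip⟩ :=
    isCompact_Icc.exists_nnreal_forall_le ((hs.norm.mul hw.norm).const_smul L)
  refine ⟨Lip, fun t ht => LipschitzWith.of_dist_le_mul fun q₁ q₂ => ?_⟩
  rw [dist_eq_norm, dist_eq_norm]
  calc ‖F q₁ (s t) (w t) - F q₂ (s t) (w t)‖
      ≤ L * (‖s t‖ * ‖w t‖) * ‖q₁ - q₂‖ := (hFlip q₁ q₂ (s t) (w t)).trans_eq (by ring)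
    _ ≤ Lip * ‖q₁ - q₂‖ := by gcongr; exact hLip t ht

theorem exists_norm_field_le {K : ℝ}
    (hFbound : ∀ (q : Q) (s v : S), ‖F q s v‖ ≤ K * ‖s‖ * ‖v‖)
    (hs : ContinuousOn s (Icc a b)) (hw : ContinuousOn w (Icc a b)) :
    ∃ M : ℝ≥0, ∀ t ∈ Icc a b, ∀ q, ‖F q (s t) (w t)‖ ≤ M := by
  obtain ⟨M, hM⟩ := isCompact_Icc.exists_nnreal_forall_le ((hs.norm.mul hw.norm).const_smul K)
  exact ⟨M, fun t ht q => (hFbound q (s t) (w t)).trans_eq (mul_assoc _ _ _) |>.trans (hM t ht)⟩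

end LinearSwimmer

theorem linear_swimmer_existence_uniqueness_general
    {S Q : Type*} [NormedAddCommGroup S] [NormedSpace ℝ S]
    [NormedAddCommGroup Q] [NormedSpace ℝ Q] [FiniteDimensional ℝ Q]
    (F : Q → S → (S →L[ℝ] Q))
    (hFcont : Continuous fun p : Q × S => F p.1 p.2)
    (K L : ℝ)
    (hFbound : ∀ (q : Q) (s v : S), ‖F q s v‖ ≤ K * ‖s‖ * ‖v‖)
    (hFlip : ∀ (q₁ q₂ : Q) (s v : S),
      ‖F q₁ s v - F q₂ s v‖ ≤ L * ‖q₁ - q₂‖ * ‖s‖ * ‖v‖)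
    (s : ℝ → S) (hs : ContDiffOn ℝ 1 s (Ici 0)) (q₀ : Q) :
    (∃ q : ℝ → Q, ContDiffOn ℝ 1 q (Ici 0) ∧ q 0 = q₀ ∧
      ∀ t ∈ Ici (0:ℝ),
        derivWithin q (Ici 0) t = F (q t) (s t) (derivWithin s (Ici 0) t)) ∧
    (∀ q₁ q₂ : ℝ → Q,
      (ContDiffOn ℝ 1 q₁ (Ici 0) ∧ q₁ 0 = q₀ ∧
        ∀ t ∈ Ici (0:ℝ),
          derivWithin q₁ (Ici 0) t = F (q₁ t) (s t) (derivWithin s (Ici 0) t)) →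
      (ContDiffOn ℝ 1 q₂ (Ici 0) ∧ q₂ 0 = q₀ ∧
        ∀ t ∈ Ici (0:ℝ),
          derivWithin q₂ (Ici 0) t = F (q₂ t) (s t) (derivWithin s (Ici 0) t)) →
      ∀ t ∈ Ici (0:ℝ), q₁ t = q₂ t) := by
  set v : ℝ → Q → Q := fun t q => F q (s t) (derivWithin s (Ici 0) t)
  have hs_cont : ContinuousOn s (Ici 0) := hs.continuousOn
  have hs' : ContinuousOn (derivWithin s (Ici 0)) (Ici 0) :=
    hs.continuousOn_derivWithin (uniqueDiffOn_Ici 0) le_rfl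
  have hv_cont {q : ℝ → Q} (hq : ContinuousOn q (Ici 0)) :
      ContinuousOn (fun t => v t (q t)) (Ici 0) :=
    (hFcont.comp_continuousOn (hq.prodMk hs_cont)).clm_apply hs'
  have hlip (b : ℝ) : ∃ Lip : ℝ≥0, ∀ t ∈ Icc 0 b, LipschitzWith Lip (v t) :=
    LinearSwimmer.exists_lipschitzWith_field hFlip (hs_cont.mono Icc_subset_Ici_self)
      (hs'.mono Icc_subset_Ici_self)
  have hbound (b : ℝ) : ∃ M : ℝ≥0, ∀ t ∈ Icc 0 b, ∀ q, ‖v t q‖ ≤ M :=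
    LinearSwimmer.exists_norm_field_le hFbound (hs_cont.mono Icc_subset_Ici_self)
      (hs'.mono Icc_subset_Ici_self)
  have hasDerivWithinAt_of_solution {q : ℝ → Q} (hq : ContDiffOn ℝ 1 q (Ici 0))
      (hq' : ∀ t ∈ Ici (0:ℝ), derivWithin q (Ici 0) t = v t (q t)) :
      ∀ t ∈ Ici (0:ℝ), HasDerivWithinAt q (v t (q t)) (Ici 0) t :=
    fun t ht => hq' t ht ▸ (hq.differentiableOn one_ne_zero t ht).hasDerivWithinAt
  refine ⟨?_, fun q₁ q₂ ⟨h₁, h₁0, h₁'⟩ ⟨h₂, h₂0, h₂'⟩ =>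
    ODE_solution_unique_of_hasDerivWithinAt_Ici hlip (hasDerivWithinAt_of_solution h₁ h₁')
      (hasDerivWithinAt_of_solution h₂ h₂') (h₁0.trans h₂0.symm)⟩
  obtain ⟨q, hq₀, hq⟩ :=
    exists_hasDerivWithinAt_Ici (fun _ => hv_cont continuousOn_const) hlip hbound q₀
  have hq_cont : ContinuousOn q (Ici 0) := fun t ht => (hq t ht).continuousWithinAt
  exact ⟨q, contDiffOn_one_of_hasDerivWithinAt (uniqueDiffOn_Ici 0) hq (hv_cont hq_cont), hq₀,
    fun t ht => (hq t ht).derivWithin (uniqueDiffOn_Ici 0 t ht)⟩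

/-- **Existence and uniqueness of trajectories of a linear swimmer.**
`S` is the (Banach) shape space, `Q` the finite-dimensional position space (a chart of the
position manifold), and `F` the datum of the linear dynamics `q' = F(q,s)(s')`.
Given a `C¹` shape function `s : [0,∞) → S` and an initial position `q₀`, there exists a
trajectory starting from `q₀`, and any two such trajectories coincide on `[0,∞)`. -/
theorem linear_swimmer_existence_uniqueness
    {S Q : Type*} [NormedAddCommGroup S] [NormedSpace ℝ S] [CompleteSpace S]
    [NormedAddCommGroup Q] [NormedSpace ℝ Q] [FiniteDimensional ℝ Q]
    (F : Q → S → (S →L[ℝ] Q))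
    (hFcont : Continuous fun p : Q × S => F p.1 p.2)
    (K L : ℝ) (hK : 0 < K) (hL : 0 < L)
    (hFbound : ∀ (q : Q) (s v : S), ‖F q s v‖ ≤ K * ‖s‖ * ‖v‖)
    (hFlip : ∀ (q₁ q₂ : Q) (s v : S),
      ‖F q₁ s v - F q₂ s v‖ ≤ L * ‖q₁ - q₂‖ * ‖s‖ * ‖v‖)
    (s : ℝ → S) (hs : ContDiffOn ℝ 1 s (Ici 0)) (q₀ : Q) :
    (∃ q : ℝ → Q, ContDiffOn ℝ 1 q (Ici 0) ∧ q 0 = q₀ ∧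
      ∀ t ∈ Ici (0:ℝ),
        derivWithin q (Ici 0) t = F (q t) (s t) (derivWithin s (Ici 0) t)) ∧
    (∀ q₁ q₂ : ℝ → Q,
      (ContDiffOn ℝ 1 q₁ (Ici 0) ∧ q₁ 0 = q₀ ∧
        ∀ t ∈ Ici (0:ℝ),
          derivWithin q₁ (Ici 0) t = F (q₁ t) (s t) (derivWithin s (Ici 0) t)) →
      (ContDiffOn ℝ 1 q₂ (Ici 0) ∧ q₂ 0 = q₀ ∧
        ∀ t ∈ Ici (0:ℝ),
          derivWithin q₂ (Ici 0) t = F (q₂ t) (s t) (derivWithin s (Ici 0) t)) →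
      ∀ t ∈ Ici (0:ℝ), q₁ t = q₂ t) :=
  linear_swimmer_existence_uniqueness_general F hFcont K L hFbound hFlip s hs q₀
end

section
/- (Reparameterization property of linear swimmers.) In the linear swimmer model with F additionally Lipschitz in its first argument (‖(F(q₁,s) − F(q₂,s))(v)‖ ≤ L‖q₁ − q₂‖‖s‖‖v‖ for some L > 0), let s : [0,∞) → S be C¹ and let q : [0,∞) → Q be a trajectory for s. Let β : [0,∞) → [0,∞) be C¹, and let q_β : [0,∞) → Q be a trajectory for the shape function s ∘ β satisfying q_β(0) = q(β(0)). Then q_β(t) = q(β(t)) for all t ≥ 0. -/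
/-!
Since the velocity `F (q, s) ṡ` is linear in `ṡ`, the chain rule shows that `q ∘ β` is again a
trajectory, now for the shape function `s ∘ β`. So `q_β` and `q ∘ β` solve the same
non-autonomous ODE `x' = F (x, s (β t)) ((s ∘ β)' t)`, whose right-hand side is Lipschitz in `x`
with constant `L ‖s (β t)‖ ‖(s ∘ β)' t‖`, continuous in `t`; on each `[0, T]` this constant is
bounded and Grönwall's uniqueness theorem applies.
-/

open Set

theorem ODE_solution_unique_Ici_of_norm_sub_le {E : Type*} [NormedAddCommGroup E]
    [NormedSpace ℝ E] {v : ℝ → E → E} {k : ℝ → ℝ} {f g : ℝ → E} {a : ℝ}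
    (hk : ContinuousOn k (Ici a))
    (hv : ∀ t ∈ Ici a, ∀ x y, ‖v t x - v t y‖ ≤ k t * ‖x - y‖)
    (hf : ∀ t ∈ Ici a, HasDerivWithinAt f (v t (f t)) (Ici a) t)
    (hg : ∀ t ∈ Ici a, HasDerivWithinAt g (v t (g t)) (Ici a) t)
    (ha : f a = g a) :
    EqOn f g (Ici a) := by
  intro T (hT : a ≤ T)
  obtain ⟨C, hC⟩ := isCompact_Icc.bddAbove_image (hk.mono (Icc_subset_Ici_self : Icc a T ⊆ _))
  have hlip : ∀ t ∈ Ico a T, LipschitzOnWith C.toNNReal (v t) univ := fun t ht ↦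
    LipschitzOnWith.of_dist_le' fun x _ y _ ↦ by
      simp only [dist_eq_norm]
      have hkC : k t ≤ C := hC (mem_image_of_mem k (Ico_subset_Icc_self ht))
      exact (hv t ht.1 x y).trans (by gcongr)
  have hderiv {h : ℝ → E} (hh : ∀ t ∈ Ici a, HasDerivWithinAt h (v t (h t)) (Ici a) t) :
      ∀ t ∈ Ico a T, HasDerivWithinAt h (v t (h t)) (Ici t) t :=
    fun t ht ↦ (hh t ht.1).mono (Ici_subset_Ici.mpr ht.1)
  have hcont {h : ℝ → E} (hh : ∀ t ∈ Ici a, HasDerivWithinAt h (v t (h t)) (Ici a) t) :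
      ContinuousOn h (Icc a T) :=
    fun t ht ↦ (hh t ht.1).continuousWithinAt.mono Icc_subset_Ici_self
  exact ODE_solution_unique_of_mem_Icc_right hlip (hcont hf) (hderiv hf) (fun _ _ ↦ mem_univ _)
    (hcont hg) (hderiv hg) (fun _ _ ↦ mem_univ _) ha ⟨hT, le_rfl⟩

section Trajectory

variable {S Q : Type*} [NormedAddCommGroup S] [NormedSpace ℝ S] [NormedAddCommGroup Q]
  [NormedSpace ℝ Q]

def IsTrajectoryOn (F : Q → S → S →L[ℝ] Q) (s : ℝ → S) (q : ℝ → Q) (U : Set ℝ) : Prop :=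
  ∀ t ∈ U, HasDerivWithinAt q (F (q t) (s t) (derivWithin s U t)) U t

namespace IsTrajectoryOn

variable {F : Q → S → S →L[ℝ] Q} {s : ℝ → S} {q : ℝ → Q} {U : Set ℝ}

theorem of_derivWithin_eq (hq : DifferentiableOn ℝ q U)
    (hode : ∀ t ∈ U, derivWithin q U t = F (q t) (s t) (derivWithin s U t)) :
    IsTrajectoryOn F s q U := fun t ht ↦
  hode t ht ▸ (hq t ht).hasDerivWithinAt

theorem comp (hq : IsTrajectoryOn F s q U) (hs : DifferentiableOn ℝ s U) {β : ℝ → ℝ}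
    {V : Set ℝ} (hβ : DifferentiableOn ℝ β V) (hβV : MapsTo β V U) (hV : UniqueDiffOn ℝ V) :
    IsTrajectoryOn F (s ∘ β) (q ∘ β) V := by
  intro t ht
  have hβt := (hβ t ht).hasDerivWithinAt
  rw [((hs _ (hβV ht)).hasDerivWithinAt.scomp t hβt hβV).derivWithin (hV t ht), map_smul]
  exact (hq _ (hβV ht)).scomp t hβt hβV

theorem eqOn_Ici {L : ℝ} {a : ℝ}
    (hF : ∀ (q₁ q₂ : Q) (σ v : S), ‖F q₁ σ v - F q₂ σ v‖ ≤ L * ‖q₁ - q₂‖ * ‖σ‖ * ‖v‖)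
    (hs : ContinuousOn s (Ici a)) (hs' : ContinuousOn (derivWithin s (Ici a)) (Ici a))
    {q₁ q₂ : ℝ → Q} (h₁ : IsTrajectoryOn F s q₁ (Ici a)) (h₂ : IsTrajectoryOn F s q₂ (Ici a))
    (ha : q₁ a = q₂ a) :
    EqOn q₁ q₂ (Ici a) :=
  ODE_solution_unique_Ici_of_norm_sub_le (v := fun t x ↦ F x (s t) (derivWithin s (Ici a) t))
    (k := fun t ↦ L * ‖s t‖ * ‖derivWithin s (Ici a) t‖) (by fun_prop)
    (fun t _ x y ↦ (hF x y _ _).trans_eq (by ring)) h₁ h₂ ha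

end IsTrajectoryOn

end Trajectory

theorem linear_swimmer_reparameterization_general
    {S Q : Type*} [NormedAddCommGroup S] [NormedSpace ℝ S]
    [NormedAddCommGroup Q] [NormedSpace ℝ Q]
    (F : Q → S → (S →L[ℝ] Q))
    (L : ℝ)
    (hFlip : ∀ (q₁ q₂ : Q) (s v : S),
      ‖F q₁ s v - F q₂ s v‖ ≤ L * ‖q₁ - q₂‖ * ‖s‖ * ‖v‖)
    (s : ℝ → S) (hs : ContDiffOn ℝ 1 s (Ici 0))
    (q : ℝ → Q) (hq : ContDiffOn ℝ 1 q (Ici 0))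
    (hode : ∀ t ∈ Ici (0:ℝ),
      derivWithin q (Ici 0) t = F (q t) (s t) (derivWithin s (Ici 0) t))
    (β : ℝ → ℝ) (hβ : ContDiffOn ℝ 1 β (Ici 0))
    (hβpos : ∀ t ∈ Ici (0:ℝ), β t ∈ Ici (0:ℝ))
    (qβ : ℝ → Q) (hqβ : ContDiffOn ℝ 1 qβ (Ici 0))
    (hodeβ : ∀ t ∈ Ici (0:ℝ),
      derivWithin qβ (Ici 0) t = F (qβ t) ((s ∘ β) t) (derivWithin (s ∘ β) (Ici 0) t))
    (hinit : qβ 0 = q (β 0)) :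
    ∀ t ∈ Ici (0:ℝ), qβ t = q (β t) := by
  have hsβ : ContDiffOn ℝ 1 (s ∘ β) (Ici 0) := hs.comp hβ hβpos
  have hqβ_traj : IsTrajectoryOn F (s ∘ β) qβ (Ici 0) :=
    .of_derivWithin_eq (hqβ.differentiableOn one_ne_zero) hodeβ
  have hq_comp_traj : IsTrajectoryOn F (s ∘ β) (q ∘ β) (Ici 0) :=
    (IsTrajectoryOn.of_derivWithin_eq (hq.differentiableOn one_ne_zero) hode).comp
      (hs.differentiableOn one_ne_zero) (hβ.differentiableOn one_ne_zero) hβpos (uniqueDiffOn_Ici 0)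
  exact hqβ_traj.eqOn_Ici hFlip hsβ.continuousOn
    (hsβ.continuousOn_derivWithin (uniqueDiffOn_Ici 0) le_rfl) hq_comp_traj hinit

/-- **Reparameterization property of linear swimmers** (Proposition 1 of the paper).
In the linear swimmer model, with `F` Lipschitz in its first argument, if `q` is a
trajectory for the shape function `s`, `β : [0,∞) → [0,∞)` is `C¹`, and `q_β` is a
trajectory for the shape function `s ∘ β` with `q_β(0) = q(β(0))`, then
`q_β(t) = q(β(t))` for all `t ≥ 0`. -/
theorem linear_swimmer_reparameterization
    {S Q : Type*} [NormedAddCommGroup S] [NormedSpace ℝ S] [CompleteSpace S]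
    [NormedAddCommGroup Q] [NormedSpace ℝ Q] [FiniteDimensional ℝ Q]
    (F : Q → S → (S →L[ℝ] Q))
    (hFcont : Continuous fun p : Q × S => F p.1 p.2)
    (K L : ℝ) (hK : 0 < K) (hL : 0 < L)
    (hFbound : ∀ (q : Q) (s v : S), ‖F q s v‖ ≤ K * ‖s‖ * ‖v‖)
    (hFlip : ∀ (q₁ q₂ : Q) (s v : S),
      ‖F q₁ s v - F q₂ s v‖ ≤ L * ‖q₁ - q₂‖ * ‖s‖ * ‖v‖)
    (s : ℝ → S) (hs : ContDiffOn ℝ 1 s (Ici 0))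
    (q : ℝ → Q) (hq : ContDiffOn ℝ 1 q (Ici 0))
    (hode : ∀ t ∈ Ici (0:ℝ),
      derivWithin q (Ici 0) t = F (q t) (s t) (derivWithin s (Ici 0) t))
    (β : ℝ → ℝ) (hβ : ContDiffOn ℝ 1 β (Ici 0))
    (hβpos : ∀ t ∈ Ici (0:ℝ), β t ∈ Ici (0:ℝ))
    (qβ : ℝ → Q) (hqβ : ContDiffOn ℝ 1 qβ (Ici 0))
    (hodeβ : ∀ t ∈ Ici (0:ℝ),
      derivWithin qβ (Ici 0) t = F (qβ t) ((s ∘ β) t) (derivWithin (s ∘ β) (Ici 0) t))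
    (hinit : qβ 0 = q (β 0)) :
    ∀ t ∈ Ici (0:ℝ), qβ t = q (β t) :=
  linear_swimmer_reparameterization_general F L hFlip s hs q hq hode β hβ hβpos qβ hqβ hodeβ hinit
end

section
/- (Scallop theorem for reciprocal strokes.) In the linear swimmer model with F additionally Lipschitz in its first argument (‖(F(q₁,s) − F(q₂,s))(v)‖ ≤ L‖q₁ − q₂‖‖s‖‖v‖ for some L > 0), let s : [0,∞) → S be C¹, let β : [0,∞) → [0,∞) be C¹, and let q_β : [0,∞) → Q be a trajectory for the shape function s ∘ β. If T > 0 satisfies β(T) = β(0), then q_β(T) = q_β(0); that is, whenever the reparameterization returns to its initial value, the swimmer returns to its initial position. -/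
/-!
A reciprocal stroke is a time change of a single ODE. Let `φ` solve `dφ/du = F(φ, s u) (s' u)`,
with the shape parameter `u` as time, over the range of `β` on `[0, T]` and with
`φ (β 0) = q_β 0`; it exists by Picard–Lindelöf, since the field is bounded and uniformly
Lipschitz there. By the chain rule and linearity of `F` in the velocity, both `q_β` and `φ ∘ β`
solve `q' = β' t • F(q, s (β t)) (s' (β t))`, so they agree on `[0, T]` by uniqueness, and
`q_β T = φ (β T) = φ (β 0) = q_β 0`.
-/

open Set
open scoped NNReal

section IntegralCurve

variable {E : Type*} [NormedAddCommGroup E] [NormedSpace ℝ E]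

theorem exists_isIntegralCurveOn_Icc_of_lipschitzWith [CompleteSpace E] {f : ℝ → E → E}
    {a b : ℝ} {Λ C : ℝ≥0} (hlip : ∀ u ∈ Icc a b, LipschitzWith Λ (f u))
    (hcont : ∀ x, ContinuousOn (f · x) (Icc a b)) (hbdd : ∀ u ∈ Icc a b, ∀ x, ‖f u x‖ ≤ C)
    {u₀ : ℝ} (hu₀ : u₀ ∈ Icc a b) (x₀ : E) :
    ∃ γ : ℝ → E, γ u₀ = x₀ ∧ IsIntegralCurveOn γ f (Icc a b) := by
  have hpl : IsPicardLindelof f ⟨u₀, hu₀⟩ x₀ (C * max (b - u₀) (u₀ - a)).toNNReal 0 C Λ :=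
    { lipschitzOnWith := fun u hu => (hlip u hu).lipschitzOnWith
      continuousOn := fun x _ => hcont x
      norm_le := fun u hu x _ => hbdd u hu x
      mul_max_le := by simp }
  exact hpl.exists_eq_forall_mem_Icc_hasDerivWithinAt₀

theorem IsIntegralCurveOn.comp_reparam {γ : ℝ → E} {f : ℝ → E → E} {s t : Set ℝ}
    (hγ : IsIntegralCurveOn γ f s) {β β' : ℝ → ℝ} (hβ : ∀ τ ∈ t, HasDerivWithinAt β (β' τ) t τ)
    (hmaps : MapsTo β t s) :
    IsIntegralCurveOn (γ ∘ β) (fun τ x => β' τ • f (β τ) x) t :=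
  fun τ hτ => (hγ (β τ) (hmaps hτ)).scomp τ (hβ τ hτ) hmaps

theorem IsIntegralCurveOn.eqOn_comp_of_reparam {γ : ℝ → E} {f : ℝ → E → E} {a b : ℝ}
    (hγ : IsIntegralCurveOn γ f (Icc a b)) {Λ : ℝ≥0}
    (hlip : ∀ u ∈ Icc a b, LipschitzWith Λ (f u))
    {β β' : ℝ → ℝ} {t₀ t₁ : ℝ} (hβ : ∀ τ ∈ Icc t₀ t₁, HasDerivWithinAt β (β' τ) (Icc t₀ t₁) τ)
    (hmaps : MapsTo β (Icc t₀ t₁) (Icc a b)) {M : ℝ} (hβ' : ∀ τ ∈ Ico t₀ t₁, ‖β' τ‖ ≤ M)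
    {q : ℝ → E} (hq : ContinuousOn q (Icc t₀ t₁))
    (hq' : ∀ τ ∈ Ico t₀ t₁, HasDerivWithinAt q (β' τ • f (β τ) (q τ)) (Ici τ) τ)
    (hq₀ : q t₀ = γ (β t₀)) :
    EqOn q (γ ∘ β) (Icc t₀ t₁) := by
  have hγβ := hγ.comp_reparam hβ hmaps
  refine ODE_solution_unique_of_mem_Icc_right (v := fun τ x => β' τ • f (β τ) x)
    (K := M.toNNReal * Λ) (s := fun _ => univ) (fun τ hτ => ?_) hq hq' (fun _ _ => trivial)
    hγβ.continuousOn (fun τ hτ => (hγβ τ (Ico_subset_Icc_self hτ)).mono_of_mem_nhdsWithin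
      (Icc_mem_nhdsGE_of_mem hτ)) (fun _ _ => trivial) hq₀
  have hβτ : ‖β' τ‖₊ ≤ M.toNNReal := NNReal.le_toNNReal_of_coe_le (hβ' τ hτ)
  exact ((lipschitzWith_smul (β' τ)).comp (hlip (β τ) (hmaps (Ico_subset_Icc_self hτ)))
    |>.weaken (mul_le_mul_left hβτ Λ)).lipschitzOnWith

end IntegralCurve

section Swimmer

variable {S Q : Type*} [NormedAddCommGroup S] [NormedSpace ℝ S]
  [NormedAddCommGroup Q] [NormedSpace ℝ Q] {F : Q → S → S →L[ℝ] Q} {s : ℝ → S}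

noncomputable def shapeField (F : Q → S → S →L[ℝ] Q) (s : ℝ → S) (u : ℝ) (q : Q) : Q :=
  F q (s u) (derivWithin s (Ici 0) u)

theorem continuousOn_shapeField (hFcont : Continuous fun p : Q × S => F p.1 p.2)
    (hs : ContDiffOn ℝ 1 s (Ici 0)) (q : Q) : ContinuousOn (shapeField F s · q) (Ici 0) := by
  have hF : ContinuousOn (fun u => F q (s u)) (Ici 0) :=
    hFcont.comp_continuousOn (continuousOn_const.prodMk hs.continuousOn)
  exact isBoundedBilinearMap_apply.continuous.comp_continuousOn
    (hF.prodMk (hs.continuousOn_derivWithin (uniqueDiffOn_Ici 0) le_rfl))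

theorem lipschitzWith_apply_of_norm_mul_norm_le {L : ℝ} (hL : 0 ≤ L)
    (hFlip : ∀ (q₁ q₂ : Q) (σ v : S), ‖F q₁ σ v - F q₂ σ v‖ ≤ L * ‖q₁ - q₂‖ * ‖σ‖ * ‖v‖)
    {σ v : S} {M : ℝ} (hM : ‖σ‖ * ‖v‖ ≤ M) :
    LipschitzWith (L * M).toNNReal (fun q => F q σ v) := by
  refine LipschitzWith.of_dist_le_mul fun q₁ q₂ => ?_
  calc dist (F q₁ σ v) (F q₂ σ v) ≤ L * ‖q₁ - q₂‖ * ‖σ‖ * ‖v‖ := by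
        rw [dist_eq_norm]; exact hFlip q₁ q₂ σ v
    _ = L * (‖σ‖ * ‖v‖) * dist q₁ q₂ := by rw [dist_eq_norm]; ring
    _ ≤ L * M * dist q₁ q₂ := by gcongr
    _ ≤ (L * M).toNNReal * dist q₁ q₂ := by gcongr; exact Real.le_coe_toNNReal _

theorem exists_lipschitzWith_and_norm_le_shapeField
    {K L : ℝ} (hK : 0 ≤ K) (hFbound : ∀ (q : Q) (σ v : S), ‖F q σ v‖ ≤ K * ‖σ‖ * ‖v‖)
    (hL : 0 ≤ L)
    (hFlip : ∀ (q₁ q₂ : Q) (σ v : S), ‖F q₁ σ v - F q₂ σ v‖ ≤ L * ‖q₁ - q₂‖ * ‖σ‖ * ‖v‖)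
    (hs : ContDiffOn ℝ 1 s (Ici 0)) {a b : ℝ} (ha : 0 ≤ a) :
    ∃ Λ C : ℝ≥0, (∀ u ∈ Icc a b, LipschitzWith Λ (shapeField F s u)) ∧
      ∀ u ∈ Icc a b, ∀ q, ‖shapeField F s u q‖ ≤ C := by
  have hsub : Icc a b ⊆ Ici 0 := fun u hu => ha.trans hu.1
  have hcont : ContinuousOn (fun u => ‖s u‖ * ‖derivWithin s (Ici 0) u‖) (Icc a b) :=
    (hs.continuousOn.norm.mul
      (hs.continuousOn_derivWithin (uniqueDiffOn_Ici 0) le_rfl).norm).mono hsub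
  obtain ⟨M, hM⟩ := isCompact_Icc.exists_bound_of_continuousOn hcont
  have hM' : ∀ u ∈ Icc a b, ‖s u‖ * ‖derivWithin s (Ici 0) u‖ ≤ M := fun u hu =>
    (Real.le_norm_self _).trans (hM u hu)
  refine ⟨(L * M).toNNReal, (K * M).toNNReal, fun u hu =>
    lipschitzWith_apply_of_norm_mul_norm_le hL hFlip (hM' u hu), fun u hu q => ?_⟩
  calc ‖shapeField F s u q‖ ≤ K * (‖s u‖ * ‖derivWithin s (Ici 0) u‖) :=
        (hFbound _ _ _).trans_eq (mul_assoc _ _ _)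
    _ ≤ K * M := by gcongr; exact hM' u hu
    _ ≤ (K * M).toNNReal := Real.le_coe_toNNReal _

theorem hasDerivWithinAt_smul_shapeField_of_comp {β : ℝ → ℝ} {q : ℝ → Q}
    (hs : ContDiffOn ℝ 1 s (Ici 0)) (hβ : ContDiffOn ℝ 1 β (Ici 0))
    (hβpos : MapsTo β (Ici 0) (Ici 0)) (hq : ContDiffOn ℝ 1 q (Ici 0))
    (hode : ∀ t ∈ Ici (0:ℝ),
      derivWithin q (Ici 0) t = F (q t) ((s ∘ β) t) (derivWithin (s ∘ β) (Ici 0) t))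
    {t : ℝ} (ht : 0 ≤ t) :
    HasDerivWithinAt q (derivWithin β (Ici 0) t • shapeField F s (β t) (q t)) (Ici t) t := by
  have hchain : derivWithin (s ∘ β) (Ici 0) t =
      derivWithin β (Ici 0) t • derivWithin s (Ici 0) (β t) :=
    derivWithin.scomp t (hs.differentiableOn one_ne_zero _ (hβpos ht))
      (hβ.differentiableOn one_ne_zero t ht) hβpos
  have hq' := (hq.differentiableOn one_ne_zero t ht).hasDerivWithinAt
  rw [hode t ht, hchain, map_smul] at hq'
  exact hq'.mono (Ici_subset_Ici.2 ht)

end Swimmer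

theorem scallop_theorem_reciprocal_general
    {S Q : Type*} [NormedAddCommGroup S] [NormedSpace ℝ S]
    [NormedAddCommGroup Q] [NormedSpace ℝ Q] [FiniteDimensional ℝ Q]
    (F : Q → S → (S →L[ℝ] Q))
    (hFcont : Continuous fun p : Q × S => F p.1 p.2)
    (K L : ℝ) (hK : 0 < K) (hL : 0 < L)
    (hFbound : ∀ (q : Q) (s v : S), ‖F q s v‖ ≤ K * ‖s‖ * ‖v‖)
    (hFlip : ∀ (q₁ q₂ : Q) (s v : S),
      ‖F q₁ s v - F q₂ s v‖ ≤ L * ‖q₁ - q₂‖ * ‖s‖ * ‖v‖)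
    (s : ℝ → S) (hs : ContDiffOn ℝ 1 s (Ici 0))
    (β : ℝ → ℝ) (hβ : ContDiffOn ℝ 1 β (Ici 0))
    (hβpos : ∀ t ∈ Ici (0:ℝ), β t ∈ Ici (0:ℝ))
    (qβ : ℝ → Q) (hqβ : ContDiffOn ℝ 1 qβ (Ici 0))
    (hodeβ : ∀ t ∈ Ici (0:ℝ),
      derivWithin qβ (Ici 0) t = F (qβ t) ((s ∘ β) t) (derivWithin (s ∘ β) (Ici 0) t))
    (T : ℝ) (hT : 0 < T) (hret : β T = β 0) :
    qβ T = qβ 0 := by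
  have hIcc : Icc 0 T ⊆ Ici (0:ℝ) := Icc_subset_Ici_self
  have hmaps : MapsTo β (Icc 0 T) (Icc 0 (sSup (β '' Icc 0 T))) := fun t ht =>
    ⟨hβpos t (hIcc ht), (hβ.continuousOn.mono hIcc).le_sSup_image_Icc ht⟩
  obtain ⟨Λ, C, hlip, hbdd⟩ :=
    exists_lipschitzWith_and_norm_le_shapeField hK.le hFbound hL.le hFlip hs le_rfl
  obtain ⟨φ, hφ₀, hφ⟩ := exists_isIntegralCurveOn_Icc_of_lipschitzWith hlip
    (fun q => (continuousOn_shapeField hFcont hs q).mono Icc_subset_Ici_self) hbdd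
    (hmaps ⟨le_rfl, hT.le⟩) (qβ 0)
  obtain ⟨M, hM⟩ := isCompact_Icc.exists_bound_of_continuousOn
    ((hβ.continuousOn_derivWithin (uniqueDiffOn_Ici 0) le_rfl).mono hIcc)
  have hqφ : EqOn qβ (φ ∘ β) (Icc 0 T) :=
    hφ.eqOn_comp_of_reparam hlip
      (fun t ht => ((hβ.differentiableOn one_ne_zero t (hIcc ht)).hasDerivWithinAt.mono hIcc))
      hmaps (fun t ht => hM t (Ico_subset_Icc_self ht)) (hqβ.continuousOn.mono hIcc)
      (fun t ht => hasDerivWithinAt_smul_shapeField_of_comp hs hβ hβpos hqβ hodeβ ht.1)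
      hφ₀.symm
  calc qβ T = φ (β T) := hqφ ⟨hT.le, le_rfl⟩
    _ = qβ 0 := by rw [hret, hφ₀]

/-- **Scallop theorem for reciprocal strokes.**
In the linear swimmer model, with `F` Lipschitz in its first argument, if the shape
function has the reciprocal form `s ∘ β` for a scalar `C¹` reparameterization
`β : [0,∞) → [0,∞)`, then whenever `β` returns to its initial value, so does any
trajectory: `β(T) = β(0)` implies `q_β(T) = q_β(0)`. -/
theorem scallop_theorem_reciprocal
    {S Q : Type*} [NormedAddCommGroup S] [NormedSpace ℝ S] [CompleteSpace S]
    [NormedAddCommGroup Q] [NormedSpace ℝ Q] [FiniteDimensional ℝ Q]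
    (F : Q → S → (S →L[ℝ] Q))
    (hFcont : Continuous fun p : Q × S => F p.1 p.2)
    (K L : ℝ) (hK : 0 < K) (hL : 0 < L)
    (hFbound : ∀ (q : Q) (s v : S), ‖F q s v‖ ≤ K * ‖s‖ * ‖v‖)
    (hFlip : ∀ (q₁ q₂ : Q) (s v : S),
      ‖F q₁ s v - F q₂ s v‖ ≤ L * ‖q₁ - q₂‖ * ‖s‖ * ‖v‖)
    (s : ℝ → S) (hs : ContDiffOn ℝ 1 s (Ici 0))
    (β : ℝ → ℝ) (hβ : ContDiffOn ℝ 1 β (Ici 0))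
    (hβpos : ∀ t ∈ Ici (0:ℝ), β t ∈ Ici (0:ℝ))
    (qβ : ℝ → Q) (hqβ : ContDiffOn ℝ 1 qβ (Ici 0))
    (hodeβ : ∀ t ∈ Ici (0:ℝ),
      derivWithin qβ (Ici 0) t = F (qβ t) ((s ∘ β) t) (derivWithin (s ∘ β) (Ici 0) t))
    (T : ℝ) (hT : 0 < T) (hret : β T = β 0) :
    qβ T = qβ 0 :=
  scallop_theorem_reciprocal_general F hFcont K L hK hL hFbound hFlip s hs β hβ hβpos qβ hqβ hodeβ T
    hT hret
end

section
/- (The displacement depends only on the endpoints of the reparameterization.) In the linear swimmer model with F additionally Lipschitz in its first argument (‖(F(q₁,s) − F(q₂,s))(v)‖ ≤ L‖q₁ − q₂‖‖s‖‖v‖ for some L > 0), let s : [0,∞) → S be C¹ and let β₁, β₂ : [0,∞) → [0,∞) be C¹ with β₁(0) = β₂(0). Let q₁ and q₂ be trajectories for the shape functions s ∘ β₁ and s ∘ β₂ respectively, with the same initial position q₁(0) = q₂(0). If T > 0 satisfies β₁(T) = β₂(T), then q₁(T) = q₂(T). -/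
/-!
By the chain rule, a trajectory for the shape function `s ∘ β` solves `q' = β'(t) • f(β t, q)`,
where `f(τ, x) = F(x, s τ)(s' τ)` is the swimmer's velocity field in shape time `τ`. The two
bounds on `F` make `f` bounded and Lipschitz in `x` on any `[0, M]`, so the shape-time equation
has a solution `Φ` on all of `[0, M]` with `Φ (β 0) = q 0`. Then `Φ ∘ β` solves the same
equation as `q`, hence `q = Φ ∘ β` by uniqueness, and `q T = Φ (β T)` only sees `β 0` and `β T`.
-/

open Set
open scoped NNReal

theorem IsCompact.exists_forall_le_of_continuousOn {X : Type*} [TopologicalSpace X]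
    {k : Set X} {g : X → ℝ} (hk : IsCompact k) (hg : ContinuousOn g k) :
    ∃ C, ∀ x ∈ k, g x ≤ C :=
  (hk.bddAbove_image hg).imp fun _ hC _ hx => hC (mem_image_of_mem g hx)

section ODE

variable {E : Type*} [NormedAddCommGroup E] [NormedSpace ℝ E]

theorem exists_forall_mem_Icc_hasDerivWithinAt_of_lipschitzWith_of_norm_le [CompleteSpace E]
    {f : ℝ → E → E} {a b C : ℝ} {K : ℝ≥0}
    (hlip : ∀ τ ∈ Icc a b, LipschitzWith K (f τ))
    (hcont : ∀ x, ContinuousOn (f · x) (Icc a b))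
    (hbound : ∀ τ ∈ Icc a b, ∀ x, ‖f τ x‖ ≤ C)
    (τ₀ : Icc a b) (x₀ : E) :
    ∃ Φ : ℝ → E, Φ τ₀ = x₀ ∧ ∀ τ ∈ Icc a b, HasDerivWithinAt Φ (f τ (Φ τ)) (Icc a b) τ := by
  -- The bound is uniform in `x`, so a ball of radius `C (b - a)` serves the whole interval.
  have hPL : IsPicardLindelof f τ₀ x₀ (C.toNNReal * (b - a).toNNReal) 0 C.toNNReal K :=
    { lipschitzOnWith := fun τ hτ => (hlip τ hτ).lipschitzOnWith
      continuousOn := fun x _ => hcont x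
      norm_le := fun τ hτ x _ => (hbound τ hτ x).trans (Real.le_coe_toNNReal C)
      mul_max_le := by
        obtain ⟨hτa, hτb⟩ := τ₀.2
        push_cast
        rw [sub_zero]
        gcongr
        exact (max_le (by linarith) (by linarith)).trans (Real.le_coe_toNNReal _) }
  exact hPL.exists_eq_forall_mem_Icc_hasDerivWithinAt₀

theorem eqOn_comp_of_hasDerivWithinAt_smul
    {f : ℝ → E → E} {a b : ℝ} {K : ℝ≥0} (hlip : ∀ τ ∈ Icc a b, LipschitzWith K (f τ))
    {Φ : ℝ → E} (hΦ : ∀ τ ∈ Icc a b, HasDerivWithinAt Φ (f τ (Φ τ)) (Icc a b) τ)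
    {β β' : ℝ → ℝ} {t₀ T B : ℝ}
    (hβ : ∀ t ∈ Icc t₀ T, HasDerivWithinAt β (β' t) (Icc t₀ T) t)
    (hβmaps : MapsTo β (Icc t₀ T) (Icc a b)) (hβ' : ∀ t ∈ Ico t₀ T, ‖β' t‖ ≤ B)
    {q : ℝ → E} (hq : ContinuousOn q (Icc t₀ T))
    (hq' : ∀ t ∈ Ico t₀ T, HasDerivWithinAt q (β' t • f (β t) (q t)) (Ici t) t)
    (h₀ : q t₀ = Φ (β t₀)) :
    EqOn q (Φ ∘ β) (Icc t₀ T) := by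
  have hΦβ : ∀ t ∈ Icc t₀ T,
      HasDerivWithinAt (Φ ∘ β) (β' t • f (β t) (Φ (β t))) (Icc t₀ T) t :=
    fun t ht => (hΦ (β t) (hβmaps ht)).scomp t (hβ t ht) hβmaps
  refine ODE_solution_unique_of_mem_Icc_right (v := fun t x => β' t • f (β t) x)
    (s := fun _ => univ) (K := B.toNNReal * K) (fun t ht => ?_) hq hq' (fun _ _ => trivial)
    (fun t ht => (hΦβ t ht).continuousWithinAt)
    (fun t ht => ?_) (fun _ _ => trivial) h₀
  · have hlip' : LipschitzWith (‖β' t‖₊ * K) (fun x => β' t • f (β t) x) :=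
      (lipschitzWith_smul (β' t)).comp (hlip (β t) (hβmaps (Ico_subset_Icc_self ht)))
    refine (hlip'.weaken ?_).lipschitzOnWith
    gcongr
    exact NNReal.le_toNNReal_of_coe_le (hβ' t ht)
  · exact (hΦβ t (Ico_subset_Icc_self ht)).mono_of_mem_nhdsWithin (Icc_mem_nhdsGE_of_mem ht)

end ODE

section Swimmer

variable {S Q : Type*} [NormedAddCommGroup S] [NormedSpace ℝ S]
  [NormedAddCommGroup Q] [NormedSpace ℝ Q] (F : Q → S → S →L[ℝ] Q) (s : ℝ → S)

noncomputable def shapeTimeField (τ : ℝ) (x : Q) : Q :=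
  F x (s τ) (derivWithin s (Ici 0) τ)

variable {F s}

theorem ContDiffOn.exists_norm_mul_norm_derivWithin_le (hs : ContDiffOn ℝ 1 s (Ici 0)) (M : ℝ) :
    ∃ C, ∀ τ ∈ Icc 0 M, ‖s τ‖ * ‖derivWithin s (Ici 0) τ‖ ≤ C :=
  isCompact_Icc.exists_forall_le_of_continuousOn <| (hs.continuousOn.norm.mul
    (hs.continuousOn_derivWithin (uniqueDiffOn_Ici 0) le_rfl).norm).mono Icc_subset_Ici_self

theorem continuousOn_shapeTimeField (hFcont : Continuous fun p : Q × S => F p.1 p.2)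
    (hs : ContDiffOn ℝ 1 s (Ici 0)) (x : Q) :
    ContinuousOn (shapeTimeField F s · x) (Ici 0) :=
  (hFcont.comp_continuousOn (continuousOn_const.prodMk hs.continuousOn)).clm_apply
    (hs.continuousOn_derivWithin (uniqueDiffOn_Ici 0) le_rfl)

theorem lipschitzWith_shapeTimeField {M C : ℝ}
    (hC : ∀ τ ∈ Icc 0 M, ‖s τ‖ * ‖derivWithin s (Ici 0) τ‖ ≤ C) {L : ℝ} (hL : 0 ≤ L)
    (hFlip : ∀ (q₁ q₂ : Q) (σ v : S), ‖F q₁ σ v - F q₂ σ v‖ ≤ L * ‖q₁ - q₂‖ * ‖σ‖ * ‖v‖) :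
    ∀ τ ∈ Icc 0 M, LipschitzWith (L * C).toNNReal (shapeTimeField F s τ) := by
  refine fun τ hτ => LipschitzWith.of_dist_le' fun x y => ?_
  rw [dist_eq_norm, dist_eq_norm]
  calc ‖shapeTimeField F s τ x - shapeTimeField F s τ y‖
      ≤ L * ‖x - y‖ * (‖s τ‖ * ‖derivWithin s (Ici 0) τ‖) := by
        rw [← mul_assoc]; exact hFlip _ _ _ _
    _ ≤ L * ‖x - y‖ * C := by gcongr; exact hC τ hτ
    _ = L * C * ‖x - y‖ := by ring

theorem norm_shapeTimeField_le {M C : ℝ}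
    (hC : ∀ τ ∈ Icc 0 M, ‖s τ‖ * ‖derivWithin s (Ici 0) τ‖ ≤ C) {K : ℝ} (hK : 0 ≤ K)
    (hFbound : ∀ (q : Q) (σ v : S), ‖F q σ v‖ ≤ K * ‖σ‖ * ‖v‖) :
    ∀ τ ∈ Icc 0 M, ∀ x, ‖shapeTimeField F s τ x‖ ≤ K * C := fun τ hτ x =>
  calc ‖shapeTimeField F s τ x‖ ≤ K * (‖s τ‖ * ‖derivWithin s (Ici 0) τ‖) := by
        rw [← mul_assoc]; exact hFbound _ _ _
    _ ≤ K * C := by gcongr; exact hC τ hτ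

theorem trajectory_eqOn_comp (hs : ContDiffOn ℝ 1 s (Ici 0))
    {M T : ℝ} {K : ℝ≥0} (hlip : ∀ τ ∈ Icc 0 M, LipschitzWith K (shapeTimeField F s τ))
    {Φ : ℝ → Q}
    (hΦ : ∀ τ ∈ Icc 0 M, HasDerivWithinAt Φ (shapeTimeField F s τ (Φ τ)) (Icc 0 M) τ)
    {β : ℝ → ℝ} (hβ : ContDiffOn ℝ 1 β (Ici 0)) (hβpos : ∀ t ∈ Ici (0 : ℝ), β t ∈ Ici (0 : ℝ))
    (hβM : ∀ t ∈ Icc 0 T, β t ≤ M)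
    {q : ℝ → Q} (hq : ContDiffOn ℝ 1 q (Ici 0))
    (hode : ∀ t ∈ Ici (0 : ℝ),
      derivWithin q (Ici 0) t = F (q t) ((s ∘ β) t) (derivWithin (s ∘ β) (Ici 0) t))
    (h₀ : q 0 = Φ (β 0)) :
    EqOn q (Φ ∘ β) (Icc 0 T) := by
  set β' := derivWithin β (Ici 0)
  obtain ⟨B, hB⟩ := (isCompact_Icc (a := 0) (b := T)).exists_forall_le_of_continuousOn
    ((hβ.continuousOn_derivWithin (uniqueDiffOn_Ici 0) le_rfl).norm.mono Icc_subset_Ici_self)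
  have hq_deriv : ∀ t ∈ Ico 0 T,
      HasDerivWithinAt q (β' t • shapeTimeField F s (β t) (q t)) (Ici t) t := by
    intro t ht
    have hchain : derivWithin (s ∘ β) (Ici 0) t = β' t • derivWithin s (Ici 0) (β t) :=
      derivWithin.scomp t (hs.differentiableOn one_ne_zero _ (hβpos t ht.1))
        (hβ.differentiableOn one_ne_zero t ht.1) fun t ht => hβpos t ht
    have hval : derivWithin q (Ici 0) t = β' t • shapeTimeField F s (β t) (q t) := by
      rw [hode t ht.1, hchain, map_smul, Function.comp_apply, shapeTimeField]
    exact hval ▸ ((hq.differentiableOn one_ne_zero t ht.1).hasDerivWithinAt.mono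
      (Ici_subset_Ici.2 ht.1))
  exact eqOn_comp_of_hasDerivWithinAt_smul hlip hΦ
    (fun t ht => (hβ.differentiableOn one_ne_zero t ht.1).hasDerivWithinAt.mono Icc_subset_Ici_self)
    (fun t ht => ⟨hβpos t ht.1, hβM t ht⟩) (fun t ht => hB t (Ico_subset_Icc_self ht))
    (hq.continuousOn.mono Icc_subset_Ici_self) hq_deriv h₀

end Swimmer

theorem displacement_depends_only_on_endpoints_general
    {S Q : Type*} [NormedAddCommGroup S] [NormedSpace ℝ S]
    [NormedAddCommGroup Q] [NormedSpace ℝ Q] [FiniteDimensional ℝ Q]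
    (F : Q → S → (S →L[ℝ] Q))
    (hFcont : Continuous fun p : Q × S => F p.1 p.2)
    (K L : ℝ) (hK : 0 < K) (hL : 0 < L)
    (hFbound : ∀ (q : Q) (s v : S), ‖F q s v‖ ≤ K * ‖s‖ * ‖v‖)
    (hFlip : ∀ (q₁ q₂ : Q) (s v : S),
      ‖F q₁ s v - F q₂ s v‖ ≤ L * ‖q₁ - q₂‖ * ‖s‖ * ‖v‖)
    (s : ℝ → S) (hs : ContDiffOn ℝ 1 s (Ici 0))
    (β₁ β₂ : ℝ → ℝ)
    (hβ₁ : ContDiffOn ℝ 1 β₁ (Ici 0)) (hβ₂ : ContDiffOn ℝ 1 β₂ (Ici 0))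
    (hβ₁pos : ∀ t ∈ Ici (0:ℝ), β₁ t ∈ Ici (0:ℝ))
    (hβ₂pos : ∀ t ∈ Ici (0:ℝ), β₂ t ∈ Ici (0:ℝ))
    (hβ0 : β₁ 0 = β₂ 0)
    (q₁ q₂ : ℝ → Q)
    (hq₁ : ContDiffOn ℝ 1 q₁ (Ici 0)) (hq₂ : ContDiffOn ℝ 1 q₂ (Ici 0))
    (hode₁ : ∀ t ∈ Ici (0:ℝ),
      derivWithin q₁ (Ici 0) t = F (q₁ t) ((s ∘ β₁) t) (derivWithin (s ∘ β₁) (Ici 0) t))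
    (hode₂ : ∀ t ∈ Ici (0:ℝ),
      derivWithin q₂ (Ici 0) t = F (q₂ t) ((s ∘ β₂) t) (derivWithin (s ∘ β₂) (Ici 0) t))
    (hinit : q₁ 0 = q₂ 0)
    (T : ℝ) (hT : 0 < T) (hend : β₁ T = β₂ T) :
    q₁ T = q₂ T := by
  obtain ⟨M, hM⟩ := (isCompact_Icc (a := 0) (b := T)).exists_forall_le_of_continuousOn
    ((hβ₁.continuousOn.sup hβ₂.continuousOn).mono Icc_subset_Ici_self)
  have hβ₁M : ∀ t ∈ Icc 0 T, β₁ t ≤ M := fun t ht => le_sup_left.trans (hM t ht)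
  have hβ₂M : ∀ t ∈ Icc 0 T, β₂ t ≤ M := fun t ht => le_sup_right.trans (hM t ht)
  obtain ⟨C, hC⟩ := hs.exists_norm_mul_norm_derivWithin_le M
  have hlip := lipschitzWith_shapeTimeField hC hL.le hFlip
  obtain ⟨Φ, hΦ₀, hΦ⟩ := exists_forall_mem_Icc_hasDerivWithinAt_of_lipschitzWith_of_norm_le hlip
    (fun x => (continuousOn_shapeTimeField hFcont hs x).mono Icc_subset_Ici_self)
    (norm_shapeTimeField_le hC hK.le hFbound)
    ⟨β₁ 0, hβ₁pos 0 self_mem_Ici, hβ₁M 0 ⟨le_rfl, hT.le⟩⟩ (q₁ 0)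
  have hT_mem : T ∈ Icc 0 T := ⟨hT.le, le_rfl⟩
  calc q₁ T = Φ (β₁ T) :=
        trajectory_eqOn_comp hs hlip hΦ hβ₁ hβ₁pos hβ₁M hq₁ hode₁ hΦ₀.symm hT_mem
    _ = Φ (β₂ T) := by rw [hend]
    _ = q₂ T := (trajectory_eqOn_comp hs hlip hΦ hβ₂ hβ₂pos hβ₂M hq₂ hode₂
        (by rw [← hinit, ← hβ0, hΦ₀]) hT_mem).symm

/-- **The displacement depends only on the endpoints of the reparameterization.**
In the linear swimmer model, with `F` Lipschitz in its first argument, let `β₁, β₂` be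
`C¹` reparameterizations `[0,∞) → [0,∞)` with `β₁(0) = β₂(0)`, and let `q₁, q₂` be
trajectories for the shape functions `s ∘ β₁` and `s ∘ β₂` with the same initial
position. If `β₁(T) = β₂(T)` for some `T > 0`, then `q₁(T) = q₂(T)`. -/
theorem displacement_depends_only_on_endpoints
    {S Q : Type*} [NormedAddCommGroup S] [NormedSpace ℝ S] [CompleteSpace S]
    [NormedAddCommGroup Q] [NormedSpace ℝ Q] [FiniteDimensional ℝ Q]
    (F : Q → S → (S →L[ℝ] Q))
    (hFcont : Continuous fun p : Q × S => F p.1 p.2)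
    (K L : ℝ) (hK : 0 < K) (hL : 0 < L)
    (hFbound : ∀ (q : Q) (s v : S), ‖F q s v‖ ≤ K * ‖s‖ * ‖v‖)
    (hFlip : ∀ (q₁ q₂ : Q) (s v : S),
      ‖F q₁ s v - F q₂ s v‖ ≤ L * ‖q₁ - q₂‖ * ‖s‖ * ‖v‖)
    (s : ℝ → S) (hs : ContDiffOn ℝ 1 s (Ici 0))
    (β₁ β₂ : ℝ → ℝ)
    (hβ₁ : ContDiffOn ℝ 1 β₁ (Ici 0)) (hβ₂ : ContDiffOn ℝ 1 β₂ (Ici 0))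
    (hβ₁pos : ∀ t ∈ Ici (0:ℝ), β₁ t ∈ Ici (0:ℝ))
    (hβ₂pos : ∀ t ∈ Ici (0:ℝ), β₂ t ∈ Ici (0:ℝ))
    (hβ0 : β₁ 0 = β₂ 0)
    (q₁ q₂ : ℝ → Q)
    (hq₁ : ContDiffOn ℝ 1 q₁ (Ici 0)) (hq₂ : ContDiffOn ℝ 1 q₂ (Ici 0))
    (hode₁ : ∀ t ∈ Ici (0:ℝ),
      derivWithin q₁ (Ici 0) t = F (q₁ t) ((s ∘ β₁) t) (derivWithin (s ∘ β₁) (Ici 0) t))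
    (hode₂ : ∀ t ∈ Ici (0:ℝ),
      derivWithin q₂ (Ici 0) t = F (q₂ t) ((s ∘ β₂) t) (derivWithin (s ∘ β₂) (Ici 0) t))
    (hinit : q₁ 0 = q₂ 0)
    (T : ℝ) (hT : 0 < T) (hend : β₁ T = β₂ T) :
    q₁ T = q₂ T :=
  displacement_depends_only_on_endpoints_general F hFcont K L hK hL hFbound hFlip s hs β₁ β₂ hβ₁ hβ₂
    hβ₁pos hβ₂pos hβ0 q₁ q₂ hq₁ hq₂ hode₁ hode₂ hinit T hT hend
end

section
/- (Generalized scallop theorem, simply connected case.) In the linear swimmer model, let s : [0,∞) → S be C¹ with shape path of finite length, i.e. ∫₀^∞ ‖s'(u)‖ du < ∞. Then every trajectory q : [0,∞) → Q for s is bounded: there exists R > 0 such that ‖q(t) − q(0)‖ ≤ R for all t ≥ 0. In fact one may take R = K (‖s(0)‖ + ∫₀^∞ ‖s'(u)‖ du) · ∫₀^∞ ‖s'(u)‖ du. -/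
/-!
Since the speed of the swimmer is bounded by `K ‖s‖ ‖s'‖`, it suffices to bound `‖s‖` uniformly:
the displacement of `s` is at most its length `L = ∫₀^∞ ‖s'‖`, so `‖s‖ ≤ ‖s 0‖ + L`, and then the
displacement of `q` is at most `K (‖s 0‖ + L) L`.
-/

open Set MeasureTheory

section Displacement

variable {E : Type*} [NormedAddCommGroup E] [NormedSpace ℝ E]

lemma norm_sub_le_setIntegral_Ici_of_norm_derivWithin_le {f : ℝ → E} {B : ℝ → ℝ} {a t : ℝ}
    (hf : DifferentiableOn ℝ f (Ici a)) (hB : IntegrableOn B (Ici a))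
    (hfB : ∀ u ∈ Ioi a, ‖derivWithin f (Ici a) u‖ ≤ B u) (ht : a ≤ t) :
    ‖f t - f a‖ ≤ ∫ u in Ici a, B u := by
  have hderiv : ∀ u ∈ Ioi a, derivWithin f (Ici a) u = deriv f u := fun u hu =>
    derivWithin_of_mem_nhds (Ici_mem_nhds hu)
  have hB_nonneg : 0 ≤ᵐ[volume.restrict (Ioi a)] B :=
    (ae_restrict_mem measurableSet_Ioi).mono fun u hu => (norm_nonneg _).trans (hfB u hu)
  calc ‖f t - f a‖ ≤ ∫ u in a..t, B u :=
        norm_sub_le_integral_of_norm_deriv_le_of_le ht (hf.continuousOn.mono Icc_subset_Ici_self)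
          (hf.mono (Ioo_subset_Icc_self.trans Icc_subset_Ici_self))
          (ae_of_all _ fun u hu => hderiv u hu.1 ▸ hfB u hu.1)
          (hB.mono_set (uIcc_of_le ht ▸ Icc_subset_Ici_self)).intervalIntegrable
    _ = ∫ u in Ioc a t, B u := intervalIntegral.integral_of_le ht
    _ ≤ ∫ u in Ioi a, B u :=
        setIntegral_mono_set (hB.mono_set Ioi_subset_Ici_self) hB_nonneg
          Ioc_subset_Ioi_self.eventuallyLE
    _ = ∫ u in Ici a, B u := integral_Ici_eq_integral_Ioi.symm

lemma norm_le_add_setIntegral_Ici_norm_derivWithin {f : ℝ → E} {a t : ℝ}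
    (hf : DifferentiableOn ℝ f (Ici a))
    (hlen : IntegrableOn (fun u => ‖derivWithin f (Ici a) u‖) (Ici a)) (ht : a ≤ t) :
    ‖f t‖ ≤ ‖f a‖ + ∫ u in Ici a, ‖derivWithin f (Ici a) u‖ :=
  (norm_le_norm_add_norm_sub' (f t) (f a)).trans <| add_le_add_right
    (norm_sub_le_setIntegral_Ici_of_norm_derivWithin_le hf hlen (fun _ _ => le_rfl) ht) _

end Displacement

theorem generalized_scallop_theorem_finite_length_general
    {S Q : Type*} [NormedAddCommGroup S] [NormedSpace ℝ S]
    [NormedAddCommGroup Q] [NormedSpace ℝ Q]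
    (F : Q → S → (S →L[ℝ] Q))
    (K : ℝ) (hK : 0 < K)
    (hFbound : ∀ (q : Q) (s v : S), ‖F q s v‖ ≤ K * ‖s‖ * ‖v‖)
    (s : ℝ → S) (hs : ContDiffOn ℝ 1 s (Ici 0))
    (hlen : IntegrableOn (fun u => ‖derivWithin s (Ici 0) u‖) (Ici 0))
    (q : ℝ → Q) (hq : ContDiffOn ℝ 1 q (Ici 0))
    (hode : ∀ t ∈ Ici (0:ℝ),
      derivWithin q (Ici 0) t = F (q t) (s t) (derivWithin s (Ici 0) t)) :
    (∃ R : ℝ, 0 < R ∧ ∀ t ∈ Ici (0:ℝ), ‖q t - q 0‖ ≤ R) ∧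
    (∀ t ∈ Ici (0:ℝ), ‖q t - q 0‖ ≤
      K * (‖s 0‖ + ∫ u in Ici (0:ℝ), ‖derivWithin s (Ici 0) u‖) *
        ∫ u in Ici (0:ℝ), ‖derivWithin s (Ici 0) u‖) := by
  set L := ∫ u in Ici (0:ℝ), ‖derivWithin s (Ici 0) u‖
  set C := K * (‖s 0‖ + L)
  have hs_diff := hs.differentiableOn one_ne_zero
  have hspeed : ∀ u ∈ Ioi (0:ℝ), ‖derivWithin q (Ici 0) u‖ ≤ C * ‖derivWithin s (Ici 0) u‖ :=
    fun u hu => by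
      rw [hode u (mem_Ici_of_Ioi hu)]
      refine (hFbound _ _ _).trans (mul_le_mul_of_nonneg_right ?_ (norm_nonneg _))
      exact mul_le_mul_of_nonneg_left
        (norm_le_add_setIntegral_Ici_norm_derivWithin hs_diff hlen (le_of_lt hu)) hK.le
  have hbound : ∀ t ∈ Ici (0:ℝ), ‖q t - q 0‖ ≤ C * L := fun t ht => by
    simpa only [integral_const_mul] using norm_sub_le_setIntegral_Ici_of_norm_derivWithin_le
      (hq.differentiableOn one_ne_zero) (hlen.const_mul C) hspeed ht
  have hL : 0 ≤ L := setIntegral_nonneg measurableSet_Ici fun _ _ => norm_nonneg _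
  have hCL : 0 ≤ C * L := mul_nonneg (mul_nonneg hK.le (by positivity)) hL
  exact ⟨⟨C * L + 1, by positivity, fun t ht => (hbound t ht).trans (by linarith)⟩, hbound⟩

/-- **Generalized scallop theorem, simply connected case.**
In the linear swimmer model, if the shape path has finite length, i.e.
`∫₀^∞ ‖s'(u)‖ du < ∞`, then every trajectory `q` for `s` is bounded, and in fact
`R = K (‖s(0)‖ + ∫₀^∞ ‖s'‖) ∫₀^∞ ‖s'‖` bounds the displacement. -/
theorem generalized_scallop_theorem_finite_length
    {S Q : Type*} [NormedAddCommGroup S] [NormedSpace ℝ S] [CompleteSpace S]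
    [NormedAddCommGroup Q] [NormedSpace ℝ Q] [FiniteDimensional ℝ Q]
    (F : Q → S → (S →L[ℝ] Q))
    (hFcont : Continuous fun p : Q × S => F p.1 p.2)
    (K : ℝ) (hK : 0 < K)
    (hFbound : ∀ (q : Q) (s v : S), ‖F q s v‖ ≤ K * ‖s‖ * ‖v‖)
    (s : ℝ → S) (hs : ContDiffOn ℝ 1 s (Ici 0))
    (hlen : IntegrableOn (fun u => ‖derivWithin s (Ici 0) u‖) (Ici 0))
    (q : ℝ → Q) (hq : ContDiffOn ℝ 1 q (Ici 0))
    (hode : ∀ t ∈ Ici (0:ℝ),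
      derivWithin q (Ici 0) t = F (q t) (s t) (derivWithin s (Ici 0) t)) :
    (∃ R : ℝ, 0 < R ∧ ∀ t ∈ Ici (0:ℝ), ‖q t - q 0‖ ≤ R) ∧
    (∀ t ∈ Ici (0:ℝ), ‖q t - q 0‖ ≤
      K * (‖s 0‖ + ∫ u in Ici (0:ℝ), ‖derivWithin s (Ici 0) u‖) *
        ∫ u in Ici (0:ℝ), ‖derivWithin s (Ici 0) u‖) :=
  generalized_scallop_theorem_finite_length_general F K hK hFbound s hs hlen q hq hode
end
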